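/- Let ξ1, ξ2 > 0, n1, n2 ≥ 2, N = n1 + n2, w1 = ξ2/ξ1. Let k ∈ (0, π) and λ = (4/ξ2)·sin²(k/2). With ψ̃_j(λ) = ξ2^j · det(M_{1:j} − λ·I) for the top-left j × j principal submatrices, A(k) = ψ̃_{n1}(λ) − w1·cos(k)·ψ̃_{n1−1}(λ) and B(k) = w1·ψ̃_{n1−1}(λ), the number λ is an eigenvalue of M if and only if A(k)·sin((n2+1)k) + B(k)·sin(k)·cos((n2+1)k) = 0. -/

import Mathlib

open Matrix Real

/-- The `(n1+n2) × (n1+n2)` two-segment tridiagonal matrix: row `i` (0-based) has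
diagonal entry `2/ξ1` and nonzero off-diagonal entries `-1/ξ1` when `i < n1`, and
diagonal entry `2/ξ2` and nonzero off-diagonal entries `-1/ξ2` when `n1 ≤ i`. -/
noncomputable def twoSegMatrix (ξ1 ξ2 : ℝ) (n1 n2 : ℕ) :
    Matrix (Fin (n1 + n2)) (Fin (n1 + n2)) ℝ :=
  Matrix.of fun i j =>
    if (i : ℕ) = (j : ℕ) then 2 / (if (i : ℕ) < n1 then ξ1 else ξ2)
    else if (i : ℕ) + 1 = (j : ℕ) ∨ (j : ℕ) + 1 = (i : ℕ) then
      -1 / (if (i : ℕ) < n1 then ξ1 else ξ2)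
    else 0

/-- `ξ^j · det(A_{1:j} − λ·I)` where `A_{1:j}` is the top-left `j × j` principal
submatrix of `A` (returns `0` for out-of-range `j`). -/
noncomputable def psiTop {N : ℕ} (A : Matrix (Fin N) (Fin N) ℝ) (ξ lam : ℝ) (j : ℕ) : ℝ :=
  if h : j ≤ N then
    ξ ^ j *
      (A.submatrix (Fin.castLE h) (Fin.castLE h) -
        lam • (1 : Matrix (Fin j) (Fin j) ℝ)).det
  else 0

/-!
Expanding along the last row, the scaled leading principal minors `ψ j` of `M - λ` satisfy
`ψ (j + 2) = (2 - ξ₂ λ) ψ (j + 1) - (ξ₂ / ξ) ψ j`, with `ξ` the scale of row `j`. The choice of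
`λ` makes `2 - ξ₂ λ = 2 cos k`, so along the second segment this is the Chebyshev recurrence,
solved by `sin k · ψ (n₁ + m) = ψ n₁ sin ((m + 1) k) - w₁ ψ (n₁ - 1) sin (m k)`. At `m = n₂` the
right side is `A sin ((n₂ + 1) k) + B sin k cos ((n₂ + 1) k)`, and `sin k ≠ 0` for `k ∈ (0, π)`.
-/

namespace Matrix

variable {R : Type*} [CommRing R] {N : ℕ}

theorem det_fin_succ_succ_of_last_row_col {n : ℕ}
    (A : Matrix (Fin (n + 2)) (Fin (n + 2)) R)
    (hrow : ∀ j : Fin n, A (Fin.last _) j.castSucc.castSucc = 0)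
    (hcol : ∀ i : Fin n, A i.castSucc.castSucc (Fin.last _) = 0) :
    A.det = A (Fin.last _) (Fin.last _) * (A.submatrix Fin.castSucc Fin.castSucc).det -
      A (Fin.last _) (Fin.last n).castSucc * A (Fin.last n).castSucc (Fin.last _) *
        (A.submatrix (Fin.castSucc ∘ Fin.castSucc) (Fin.castSucc ∘ Fin.castSucc)).det := by
  have hminor : (A.submatrix Fin.castSucc (Fin.last n).castSucc.succAbove).det =
      A (Fin.last n).castSucc (Fin.last _) *
        (A.submatrix (Fin.castSucc ∘ Fin.castSucc) (Fin.castSucc ∘ Fin.castSucc)).det := by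
    rw [det_succ_column _ (Fin.last n), Fin.sum_univ_castSucc]
    simp [Fin.succAbove_last, hcol, Function.comp_def]
  rw [det_succ_row A (Fin.last _), Fin.sum_univ_castSucc, Fin.sum_univ_castSucc]
  simp only [Nat.succ_eq_add_one, Fin.val_last, Fin.val_castSucc, hrow, mul_zero,
    Fin.succAbove_last, zero_mul, Finset.sum_const_zero, odd_add_one_self, Odd.neg_one_pow,
    neg_mul, one_mul, hminor, zero_add, Even.add_self, Even.neg_pow, one_pow]
  ring

def IsTridiagonal (A : Matrix (Fin N) (Fin N) R) : Prop :=
  ∀ i j : Fin N, (i : ℕ) + 1 < j → A i j = 0 ∧ A j i = 0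

def leadingMinor (A : Matrix (Fin N) (Fin N) R) (j : ℕ) : R :=
  if h : j ≤ N then (A.submatrix (Fin.castLE h) (Fin.castLE h)).det else 0

theorem IsTridiagonal.leadingMinor_add_two {A : Matrix (Fin N) (Fin N) R} (hA : A.IsTridiagonal)
    {j : ℕ} (hj : j + 2 ≤ N) :
    A.leadingMinor (j + 2) = A ⟨j + 1, by omega⟩ ⟨j + 1, by omega⟩ * A.leadingMinor (j + 1) -
      A ⟨j + 1, by omega⟩ ⟨j, by omega⟩ * A ⟨j, by omega⟩ ⟨j + 1, by omega⟩ * A.leadingMinor j := by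
  rw [leadingMinor, dif_pos hj, leadingMinor, dif_pos (by omega), leadingMinor, dif_pos (by omega),
    det_fin_succ_succ_of_last_row_col]
  · rfl
  · intro i
    exact (hA _ _ (by simp)).2
  · intro i
    exact (hA _ _ (by simp)).1

theorem leadingMinor_self (A : Matrix (Fin N) (Fin N) R) : A.leadingMinor N = A.det := by
  rw [leadingMinor, dif_pos le_rfl]
  rfl

theorem mem_spectrum_iff_det_sub_smul_one_eq_zero {n K : Type*} [Fintype n] [DecidableEq n]
    [Field K] (A : Matrix n n K) (r : K) : r ∈ spectrum K A ↔ (A - r • 1).det = 0 := by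
  rw [spectrum.mem_iff, Algebra.algebraMap_eq_smul_one, ← neg_sub, isUnit_iff_isUnit_det,
    det_neg, isUnit_iff_ne_zero, not_not, mul_eq_zero, or_iff_right]
  exact pow_ne_zero _ (by norm_num)

end Matrix

/-- `a` plays the role of the missing value `u (-1)`. -/
theorem sin_mul_eq_of_two_cos_recurrence (u : ℕ → ℝ) (a k : ℝ) {n : ℕ}
    (h1 : 1 ≤ n → u 1 = 2 * cos k * u 0 - a)
    (hrec : ∀ m, m + 2 ≤ n → u (m + 2) = 2 * cos k * u (m + 1) - u m) :
    ∀ m ≤ n, sin k * u m = u 0 * sin ((m + 1) * k) - a * sin (m * k) := by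
  have sin_add_add_sin_sub (x : ℝ) : sin (x + k) + sin (x - k) = 2 * cos k * sin x := by
    rw [sin_add, sin_sub]; ring
  intro m
  induction m using Nat.strong_induction_on with
  | _ m ih =>
    match m with
    | 0 => simp [mul_comm]
    | 1 =>
      intro hm
      rw [h1 hm]
      push_cast
      rw [one_add_one_eq_two, sin_two_mul, one_mul]
      ring
    | m + 2 =>
      intro hm
      have ih1 := ih (m + 1) (by omega) (by omega)
      have ih0 := ih m (by omega) (by omega)
      have e2 := sin_add_add_sin_sub ((m + 2) * k)
      have e1 := sin_add_add_sin_sub ((m + 1) * k)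
      rw [hrec m hm]
      push_cast at ih1 ⊢
      ring_nf at ih1 ih0 e1 e2 ⊢
      linear_combination 2 * cos k * ih1 - ih0 - u 0 * e2 + a * e1

theorem psiTop_eq_leadingMinor {N : ℕ} (A : Matrix (Fin N) (Fin N) ℝ) (ξ lam : ℝ) (j : ℕ) :
    psiTop A ξ lam j = ξ ^ j * (A - lam • 1).leadingMinor j := by
  unfold psiTop leadingMinor
  split_ifs with h
  · rw [← submatrix_one _ (Fin.castLE_injective h)]
    rfl
  · simp

theorem twoSegMatrix_sub_smul_one_isTridiagonal (ξ1 ξ2 lam : ℝ) (n1 n2 : ℕ) :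
    (twoSegMatrix ξ1 ξ2 n1 n2 - lam • 1).IsTridiagonal := by
  intro i j hij
  simp only [twoSegMatrix, Matrix.sub_apply, Matrix.smul_apply, of_apply, one_apply, Fin.ext_iff]
  constructor <;> split_ifs <;> first | omega | simp

theorem psiTop_twoSegMatrix_add_two (ξ1 ξ2 lam : ℝ) (n1 n2 : ℕ) {j : ℕ} (hξ2 : ξ2 ≠ 0)
    (hj1 : n1 ≤ j + 1) (hj : j + 2 ≤ n1 + n2) :
    psiTop (twoSegMatrix ξ1 ξ2 n1 n2) ξ2 lam (j + 2) =
      (2 - ξ2 * lam) * psiTop (twoSegMatrix ξ1 ξ2 n1 n2) ξ2 lam (j + 1) -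
        ξ2 / (if j < n1 then ξ1 else ξ2) * psiTop (twoSegMatrix ξ1 ξ2 n1 n2) ξ2 lam j := by
  simp only [psiTop_eq_leadingMinor,
    (twoSegMatrix_sub_smul_one_isTridiagonal ξ1 ξ2 lam n1 n2).leadingMinor_add_two hj]
  simp only [twoSegMatrix, Matrix.sub_apply, of_apply, ↓reduceIte,
    Nat.not_lt.mpr hj1, Matrix.smul_apply, one_apply, smul_eq_mul, mul_one, Nat.add_eq_left,
    one_ne_zero, or_true, Fin.mk.injEq, mul_zero, sub_zero, Nat.left_eq_add, true_or]
  field_simp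
  ring

theorem sin_mul_psiTop_twoSegMatrix (ξ1 ξ2 lam k : ℝ) (n1 n2 : ℕ) (hξ2 : ξ2 ≠ 0)
    (hn1 : 1 ≤ n1) (hlam : 2 - ξ2 * lam = 2 * cos k) :
    sin k * psiTop (twoSegMatrix ξ1 ξ2 n1 n2) ξ2 lam (n1 + n2) =
      psiTop (twoSegMatrix ξ1 ξ2 n1 n2) ξ2 lam n1 * sin ((n2 + 1) * k) -
        ξ2 / ξ1 * psiTop (twoSegMatrix ξ1 ξ2 n1 n2) ξ2 lam (n1 - 1) * sin (n2 * k) := by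
  set ψ := psiTop (twoSegMatrix ξ1 ξ2 n1 n2) ξ2 lam
  have hstart (h : 1 ≤ n2) : ψ (n1 + 1) = 2 * cos k * ψ n1 - ξ2 / ξ1 * ψ (n1 - 1) := by
    have := psiTop_twoSegMatrix_add_two ξ1 ξ2 lam n1 n2 (j := n1 - 1) hξ2 (by omega) (by omega)
    rwa [show n1 - 1 + 2 = n1 + 1 by omega, show n1 - 1 + 1 = n1 by omega,
      if_pos (by omega), hlam] at this
  have hstep (m : ℕ) (hm : m + 2 ≤ n2) :
      ψ (n1 + (m + 2)) = 2 * cos k * ψ (n1 + (m + 1)) - ψ (n1 + m) := by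
    have := psiTop_twoSegMatrix_add_two ξ1 ξ2 lam n1 n2 (j := n1 + m) hξ2 (by omega) (by omega)
    rwa [if_neg (by omega), div_self hξ2, one_mul, hlam] at this
  simpa using sin_mul_eq_of_two_cos_recurrence (fun m => ψ (n1 + m)) (ξ2 / ξ1 * ψ (n1 - 1)) k
    hstart hstep n2 le_rfl

theorem twoSeg_eigenvalue_iff_general (ξ1 ξ2 : ℝ) (hξ2 : 0 < ξ2)
    (n1 n2 : ℕ) (hn1 : 2 ≤ n1) (k : ℝ) (hk : k ∈ Set.Ioo 0 π) :
    let lam := (4 / ξ2) * Real.sin (k / 2) ^ 2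
    let M := twoSegMatrix ξ1 ξ2 n1 n2
    let A := psiTop M ξ2 lam n1 - (ξ2 / ξ1) * Real.cos k * psiTop M ξ2 lam (n1 - 1)
    let B := (ξ2 / ξ1) * psiTop M ξ2 lam (n1 - 1)
    lam ∈ spectrum ℝ M ↔
      A * Real.sin ((n2 + 1) * k) + B * Real.sin k * Real.cos ((n2 + 1) * k) = 0 := by
  intro lam M A B
  have hcos : 2 - ξ2 * lam = 2 * cos k := by
    rw [show lam = 4 / ξ2 * sin (k / 2) ^ 2 from rfl, sin_sq_eq_half_sub,
      show 2 * (k / 2) = k by ring]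
    field_simp
    ring
  have hsol := sin_mul_psiTop_twoSegMatrix ξ1 ξ2 lam k n1 n2 hξ2.ne' (by omega) hcos
  have hkey : A * sin ((n2 + 1) * k) + B * sin k * cos ((n2 + 1) * k) =
      sin k * psiTop M ξ2 lam (n1 + n2) := by
    have e : sin (n2 * k) = sin ((n2 + 1) * k - k) := by ring_nf
    rw [sin_sub] at e
    linear_combination -hsol + B * e
  have hsin : sin k ≠ 0 := (sin_pos_of_pos_of_lt_pi hk.1 hk.2).ne'
  rw [mem_spectrum_iff_det_sub_smul_one_eq_zero, hkey, psiTop_eq_leadingMinor, leadingMinor_self]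
  simp [hsin, hξ2.ne']

theorem twoSeg_eigenvalue_iff (ξ1 ξ2 : ℝ) (hξ1 : 0 < ξ1) (hξ2 : 0 < ξ2)
    (n1 n2 : ℕ) (hn1 : 2 ≤ n1) (hn2 : 2 ≤ n2) (k : ℝ) (hk : k ∈ Set.Ioo 0 π) :
    let lam := (4 / ξ2) * Real.sin (k / 2) ^ 2
    let M := twoSegMatrix ξ1 ξ2 n1 n2
    let A := psiTop M ξ2 lam n1 - (ξ2 / ξ1) * Real.cos k * psiTop M ξ2 lam (n1 - 1)
    let B := (ξ2 / ξ1) * psiTop M ξ2 lam (n1 - 1)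
    lam ∈ spectrum ℝ M ↔
      A * Real.sin ((n2 + 1) * k) + B * Real.sin k * Real.cos ((n2 + 1) * k) = 0 :=
  twoSeg_eigenvalue_iff_general ξ1 ξ2 hξ2 n1 n2 hn1 k hk
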